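/- For every finite m ≥ 1, rk(ℤ · m) = ω + ⌊log₂(m + 1)⌋, where ℤ · m denotes the linear order consisting of m consecutive copies of the integers. -/

import Mathlib

open Ordinal

/-- `RkGE α s` means that the rank of `s`, viewed as a linear order in its own right,
is at least `α`.  (`rk(s) ≥ β + 1` iff there is `c ∈ s` such that both
`{y ∈ s | y < c}` and `{y ∈ s | c < y}` have rank at least `β`; the clauses for `0`
and limit ordinals are folded into the single quantifier `∀ β < α`.) -/
def RkGE {Y : Type*} [LinearOrder Y] : Ordinal → Set Y → Prop :=
  WellFounded.fix (C := fun _ => Set Y → Prop) Ordinal.lt_wf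
    (fun α ih s => ∀ β, ∀ hβ : β < α,
      ∃ c ∈ s, ih β hβ {y ∈ s | y < c} ∧ ih β hβ {y ∈ s | c < y})

/-- `S` is a cut of the finite set `F`: a downward-closed (within `F`) subset of `F`.
For `F = {a_0 < … < a_{m-1}}` the cuts are exactly the `m + 1` lower segments of `F`,
and they index the `m + 1` intervals that `F` determines. -/
def IsCut {Y : Type*} [LinearOrder Y] (F S : Set Y) : Prop :=
  S ⊆ F ∧ ∀ a ∈ F, ∀ b ∈ S, a < b → a ∈ S

/-- The interval of `Y` determined by the cut `S` of `F`: all points lying strictly above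
every element of `S` and strictly below every element of `F \\ S`. -/
def cutInterval {Y : Type*} [LinearOrder Y] (F S : Set Y) : Set Y :=
  {y | (∀ a ∈ S, a < y) ∧ ∀ a ∈ F, a ∉ S → y < a}

/-- `RankGE α F` means `rk_Y(F) ≥ α` for a finite subset `F` of the linear order `Y`:
`rk_Y(F) ≥ β + 1` iff every interval determined by `F` contains a point `c` with
`rk_Y(F ∪ {c}) ≥ β` (the clauses for `0` and limits are folded into `∀ β < α`). -/
def RankGE {Y : Type*} [LinearOrder Y] : Ordinal → Set Y → Prop :=
  WellFounded.fix (C := fun _ => Set Y → Prop) Ordinal.lt_wf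
    (fun α ih F => ∀ β, ∀ hβ : β < α, ∀ S : Set Y, IsCut F S →
      ∃ c ∈ cutInterval F S, ih β hβ (insert c F))

section Generic
variable {Y : Type*} [LinearOrder Y]

lemma rkGE_iff (α : Ordinal) (s : Set Y) :
    RkGE α s ↔ ∀ β < α, ∃ c ∈ s, RkGE β {y ∈ s | y < c} ∧ RkGE β {y ∈ s | c < y} := by
  unfold RkGE
  rw [WellFounded.fix_eq]

lemma rkGE_anti {α β : Ordinal} (h : β ≤ α) {s : Set Y} (hs : RkGE α s) : RkGE β s := by
  rw [rkGE_iff] at hs ⊢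
  exact fun γ hγ => hs γ (hγ.trans_le h)

lemma rkGE_mono : ∀ (α : Ordinal) {s t : Set Y}, s ⊆ t → RkGE α s → RkGE α t := by
  intro α
  induction α using Ordinal.induction with
  | h α ih =>
    intro s t hst hs
    rw [rkGE_iff] at hs ⊢
    intro β hβ
    obtain ⟨c, hc, hL, hR⟩ := hs β hβ
    exact ⟨c, hst hc, ih β hβ (fun y hy => ⟨hst hy.1, hy.2⟩) hL,
      ih β hβ (fun y hy => ⟨hst hy.1, hy.2⟩) hR⟩

/-- median split -/
lemma split_finset {t : Set Y} {N : ℕ} (u : Finset Y) (hu : ↑u ⊆ t)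
    (hcard : u.card = 2 * N + 1) :
    ∃ c ∈ t, (∃ uL : Finset Y, ↑uL ⊆ {y ∈ t | y < c} ∧ uL.card = N) ∧
      (∃ uR : Finset Y, ↑uR ⊆ {y ∈ t | c < y} ∧ uR.card = N) := by
  have e := u.orderIsoOfFin hcard
  set c : Y := (e ⟨N, by omega⟩ : Y) with hc
  have hmem : ∀ (j : Fin (2*N+1)), (e j : Y) ∈ t := fun j => hu (e j).2
  refine ⟨c, hmem _, ?_, ?_⟩
  · refine ⟨(Finset.univ : Finset (Fin N)).image (fun j => (e ⟨j.1, by omega⟩ : Y)), ?_, ?_⟩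
    · intro y hy
      simp only [Finset.coe_image, Set.mem_image] at hy
      obtain ⟨j, -, rfl⟩ := hy
      refine ⟨hmem _, ?_⟩
      rw [hc]
      exact Subtype.coe_lt_coe.2 (e.strictMono (by exact Fin.mk_lt_mk.2 j.2))
    · rw [Finset.card_image_of_injective _ ?_, Finset.card_univ, Fintype.card_fin]
      intro a b hab
      have := e.injective (Subtype.coe_injective hab)
      exact Fin.ext (by simpa using congrArg Fin.val this)
  · refine ⟨(Finset.univ : Finset (Fin N)).image (fun j => (e ⟨N + 1 + j.1, by omega⟩ : Y)), ?_, ?_⟩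
    · intro y hy
      simp only [Finset.coe_image, Set.mem_image] at hy
      obtain ⟨j, -, rfl⟩ := hy
      refine ⟨hmem _, ?_⟩
      rw [hc]
      exact Subtype.coe_lt_coe.2 (e.strictMono (by exact Fin.mk_lt_mk.2 (by omega)))
    · rw [Finset.card_image_of_injective _ ?_, Finset.card_univ, Fintype.card_fin]
      intro a b hab
      have := e.injective (Subtype.coe_injective hab)
      have := congrArg Fin.val this
      simp only at this
      exact Fin.ext (by omega)

lemma rkGE_nat_of_card : ∀ (n : ℕ) (t : Set Y),
    (∃ u : Finset Y, ↑u ⊆ t ∧ u.card = 2 ^ n - 1) → RkGE (n : Ordinal) t := by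
  intro n
  induction n with
  | zero =>
    intro t _
    rw [rkGE_iff]
    intro β hβ
    simp only [Nat.cast_zero] at hβ
    exact absurd hβ (not_lt_zero (a := β))
  | succ n ih =>
    intro t ⟨u, hu, hcard⟩
    have h1 : 1 ≤ 2 ^ n := Nat.one_le_two_pow
    have h2 : 2 ^ (n+1) = 2 * 2 ^ n := by ring
    have hcard' : u.card = 2 * (2 ^ n - 1) + 1 := by omega
    obtain ⟨c, hc, ⟨uL, hL, hLc⟩, ⟨uR, hR, hRc⟩⟩ := split_finset u hu hcard'
    rw [rkGE_iff]
    intro β hβ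
    have hβn : β ≤ (n : Ordinal) := by
      rw [Nat.cast_succ, Ordinal.add_one_eq_succ, Order.lt_succ_iff] at hβ
      exact hβ
    exact ⟨c, hc, rkGE_anti hβn (ih _ ⟨uL, hL, hLc⟩), rkGE_anti hβn (ih _ ⟨uR, hR, hRc⟩)⟩

lemma card_of_rkGE_nat : ∀ (n : ℕ) (t : Set Y), RkGE (n : Ordinal) t →
    ∃ u : Finset Y, ↑u ⊆ t ∧ u.card = 2 ^ n - 1 := by
  intro n
  induction n with
  | zero => exact fun t _ => ⟨∅, by simp⟩
  | succ n ih =>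
    intro t ht
    rw [rkGE_iff] at ht
    have hn : (n : Ordinal) < (↑(n+1) : Ordinal) := by
      exact_mod_cast Nat.lt_succ_self n
    obtain ⟨c, hc, hL, hR⟩ := ht _ hn
    obtain ⟨uL, huL, hcL⟩ := ih _ hL
    obtain ⟨uR, huR, hcR⟩ := ih _ hR
    have h1 : 1 ≤ 2 ^ n := Nat.one_le_two_pow
    have hdLR : Disjoint uL uR := by
      rw [Finset.disjoint_left]
      intro a haL haR
      exact absurd ((huR haR).2) (not_lt.2 (le_of_lt (huL haL).2))
    have hdc : Disjoint (uL ∪ uR) {c} := by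
      rw [Finset.disjoint_right]
      intro a ha
      simp only [Finset.mem_singleton] at ha
      intro h
      rcases Finset.mem_union.1 h with h | h
      · exact lt_irrefl c (ha ▸ (huL h).2)
      · exact lt_irrefl c (ha ▸ (huR h).2)
    refine ⟨uL ∪ uR ∪ {c}, ?_, ?_⟩
    · intro y hy
      simp only [Finset.coe_union, Set.mem_union, Finset.coe_singleton, Set.mem_singleton_iff] at hy
      rcases hy with (h | h) | h
      · exact (huL h).1
      · exact (huR h).1
      · subst h; exact hc
    · rw [Finset.card_union_of_disjoint hdc, Finset.card_union_of_disjoint hdLR,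
        Finset.card_singleton, hcL, hcR]
      have h3 : 2 ^ (n+1) = 2 * 2 ^ n := by ring
      omega

lemma infinite_of_rkGE_omega {t : Set Y} (ht : RkGE ω t) : t.Infinite := by
  by_contra hf
  rw [Set.not_infinite] at hf
  set N := t.ncard with hN
  obtain ⟨u, hu, hcard⟩ := card_of_rkGE_nat (N + 1) t
    (rkGE_anti (le_of_lt (Ordinal.natCast_lt_omega0 _)) ht)
  have hle : u.card ≤ N := by
    rw [← Set.ncard_coe_finset u]
    exact Set.ncard_le_ncard hu hf
  have := Nat.lt_two_pow_self (n := N + 1)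
  omega
end Generic

section Spec
variable {m : ℕ}

lemma copy_lt {i j : Fin m} {z w : ℤ} (h : i < j) : toLex (i, z) < toLex (j, w) :=
  Prod.Lex.toLex_lt_toLex.2 (Or.inl h)

lemma copy_lt2 {i : Fin m} {z w : ℤ} (h : z < w) : toLex (i, z) < toLex (i, w) :=
  Prod.Lex.toLex_lt_toLex.2 (Or.inr ⟨rfl, h⟩)

lemma copy_inj (i : Fin m) : Function.Injective (fun z : ℤ => toLex (i, z)) := by
  intro a b h
  simpa using congrArg (fun x => (ofLex x).2) h

lemma main_lb : ∀ (k : ℕ) (s : Set (Lex (Fin m × ℤ))), s.Infinite →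
    ∀ T : Finset (Fin m), 2 ^ k - 1 ≤ T.card →
    (∀ i ∈ T, ∀ z : ℤ, toLex (i, z) ∈ s) → RkGE (ω + k) s := by
  intro k
  induction k using Nat.strong_induction_on with
  | _ k ihk =>
  intro s hs T hT hfull
  rw [rkGE_iff]
  intro β hβ
  rcases lt_or_ge β ω with hβω | hβω
  · obtain ⟨n, rfl⟩ := Ordinal.lt_omega0.1 hβω
    obtain ⟨u, hu, hcard⟩ := hs.exists_subset_card_eq (2 * (2 ^ n - 1) + 1)
    obtain ⟨c, hc, hLf, hRf⟩ := split_finset u hu hcard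
    exact ⟨c, hc, rkGE_nat_of_card n _ hLf, rkGE_nat_of_card n _ hRf⟩
  · have hgam := Ordinal.add_sub_cancel_of_le hβω
    have hlt : β - ω < (k : Ordinal) := by
      rw [← hgam] at hβ; exact (add_lt_add_iff_left ω).1 hβ
    obtain ⟨l, hl⟩ := Ordinal.lt_omega0.1 (hlt.trans (Ordinal.natCast_lt_omega0 k))
    have hlk : l < k := by rw [hl] at hlt; exact_mod_cast hlt
    have hβeq : β = ω + l := by rw [← hgam, hl]
    subst hβeq
    -- T is big enough
    have h1 : 1 ≤ 2 ^ l := Nat.one_le_two_pow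
    have h2 : 2 ^ (l + 1) = 2 * 2 ^ l := by ring
    have hTbig : 2 ^ (l + 1) - 1 ≤ T.card := by
      refine le_trans ?_ hT
      have := Nat.pow_le_pow_right (by norm_num : 1 ≤ 2) hlk
      omega
    have e := T.orderIsoOfFin rfl
    have hidx : 2 ^ l - 1 < T.card := by omega
    set ic : Fin m := (e ⟨2 ^ l - 1, hidx⟩ : Fin m) with hic
    have hicT : ic ∈ T := (e ⟨2 ^ l - 1, hidx⟩).2
    set c : Lex (Fin m × ℤ) := toLex (ic, 0) with hc
    refine ⟨c, hfull ic hicT 0, ?_, ?_⟩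
    · -- left side
      refine ihk l hlk _ ?_
        ((Finset.univ : Finset (Fin (2 ^ l - 1))).image
          (fun j => (e ⟨j.1, by omega⟩ : Fin m))) ?_ ?_
      · refine Set.Infinite.mono ?_ (((Set.Iio_infinite 0)).image ((copy_inj ic).injOn))
        rintro y ⟨z, hz, rfl⟩
        exact ⟨hfull ic hicT z, copy_lt2 hz⟩
      · rw [Finset.card_image_of_injective _ ?_, Finset.card_univ, Fintype.card_fin]
        intro a b hab
        have := e.injective (Subtype.coe_injective hab)
        exact Fin.ext (by simpa using congrArg Fin.val this)
      · intro i hi z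
        simp only [Finset.mem_image, Finset.mem_univ, true_and] at hi
        obtain ⟨j, rfl⟩ := hi
        have hjlt : (⟨j.1, by omega⟩ : Fin T.card) < ⟨2 ^ l - 1, hidx⟩ :=
          Fin.mk_lt_mk.2 j.2
        have hlt' : (e ⟨j.1, by omega⟩ : Fin m) < ic :=
          Subtype.coe_lt_coe.2 (e.strictMono hjlt)
        exact ⟨hfull _ (e ⟨j.1, by omega⟩).2 z, copy_lt hlt'⟩
    · -- right side
      refine ihk l hlk _ ?_
        ((Finset.univ : Finset (Fin (2 ^ l - 1))).image
          (fun j => (e ⟨2 ^ l + j.1, by omega⟩ : Fin m))) ?_ ?_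
      · refine Set.Infinite.mono ?_ (((Set.Ioi_infinite 0)).image ((copy_inj ic).injOn))
        rintro y ⟨z, hz, rfl⟩
        exact ⟨hfull ic hicT z, copy_lt2 hz⟩
      · rw [Finset.card_image_of_injective _ ?_, Finset.card_univ, Fintype.card_fin]
        intro a b hab
        have := e.injective (Subtype.coe_injective hab)
        have := congrArg Fin.val this
        simp only at this
        exact Fin.ext (by omega)
      · intro i hi z
        simp only [Finset.mem_image, Finset.mem_univ, true_and] at hi
        obtain ⟨j, rfl⟩ := hi
        have hjlt : (⟨2 ^ l - 1, hidx⟩ : Fin T.card) < ⟨2 ^ l + j.1, by omega⟩ :=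
          Fin.mk_lt_mk.2 (by omega)
        have hlt' : ic < (e ⟨2 ^ l + j.1, by omega⟩ : Fin m) :=
          Subtype.coe_lt_coe.2 (e.strictMono hjlt)
        exact ⟨hfull _ (e ⟨2 ^ l + j.1, by omega⟩).2 z, copy_lt hlt'⟩

lemma full_count_of_rkGE : ∀ (l : ℕ) (s : Set (Lex (Fin m × ℤ))), s.OrdConnected →
    RkGE (ω + l) s →
    s.Infinite ∧ 2 ^ l - 1 ≤ Set.ncard {i : Fin m | ∀ z : ℤ, toLex (i, z) ∈ s} := by
  intro l
  induction l with
  | zero =>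
    intro s _ h
    refine ⟨infinite_of_rkGE_omega (rkGE_anti ?_ h), by simp⟩
    exact le_self_add
  | succ l ih =>
    intro s hconv h
    have hinf : s.Infinite :=
      infinite_of_rkGE_omega (rkGE_anti (le_self_add) h)
    refine ⟨hinf, ?_⟩
    rw [rkGE_iff] at h
    have hlt : ω + (l : Ordinal) < ω + (↑(l + 1) : Ordinal) := by
      refine (add_lt_add_iff_left ω).2 ?_
      exact_mod_cast Nat.lt_succ_self l
    obtain ⟨c, hc, hL, hR⟩ := h _ hlt
    have hLconv : ({y ∈ s | y < c}).OrdConnected := hconv.inter Set.ordConnected_Iio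
    have hRconv : ({y ∈ s | c < y}).OrdConnected := hconv.inter Set.ordConnected_Ioi
    obtain ⟨hLinf, hLcard⟩ := ih _ hLconv hL
    obtain ⟨hRinf, hRcard⟩ := ih _ hRconv hR
    set c1 : Fin m := (ofLex c).1 with hc1
    set c2 : ℤ := (ofLex c).2 with hc2
    have hceq : c = toLex (c1, c2) := rfl
    by_cases hfc : ∀ z : ℤ, toLex (c1, z) ∈ s
    · -- counting case
      set A := {i : Fin m | ∀ z : ℤ, toLex (i, z) ∈ {y ∈ s | y < c}} with hA
      set B := {i : Fin m | ∀ z : ℤ, toLex (i, z) ∈ {y ∈ s | c < y}} with hB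
      set C := {i : Fin m | ∀ z : ℤ, toLex (i, z) ∈ s} with hC
      have hAlt : ∀ i ∈ A, i < c1 := by
        intro i hi
        have := (hi c2).2
        rw [hceq] at this
        rcases Prod.Lex.toLex_lt_toLex.1 this with h | ⟨h1, h2⟩
        · exact h
        · exact absurd h2 (lt_irrefl c2)
      have hBgt : ∀ i ∈ B, c1 < i := by
        intro i hi
        have := (hi c2).2
        rw [hceq] at this
        rcases Prod.Lex.toLex_lt_toLex.1 this with h | ⟨h1, h2⟩
        · exact h
        · exact absurd h2 (lt_irrefl c2)
      have hd1 : Disjoint A B := by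
        rw [Set.disjoint_left]
        intro i hiA hiB
        exact absurd (hBgt i hiB) (not_lt.2 (le_of_lt (hAlt i hiA)))
      have hd2 : Disjoint (A ∪ B) {c1} := by
        rw [Set.disjoint_right]
        intro i hi
        rw [Set.mem_singleton_iff] at hi
        subst hi
        rintro (h | h)
        · exact absurd (hAlt _ h) (lt_irrefl _)
        · exact absurd (hBgt _ h) (lt_irrefl _)
      have hsub : A ∪ B ∪ {c1} ⊆ C := by
        rintro i ((h | h) | h)
        · exact fun z => (h z).1
        · exact fun z => (h z).1
        · rw [Set.mem_singleton_iff] at h; subst h; exact hfc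
      have hcount : (A ∪ B ∪ {c1}).ncard = A.ncard + B.ncard + 1 := by
        rw [Set.ncard_union_eq hd2 (Set.toFinite _) (Set.toFinite _),
          Set.ncard_union_eq hd1 (Set.toFinite _) (Set.toFinite _),
          Set.ncard_singleton]
      have hle := Set.ncard_le_ncard hsub (Set.toFinite C)
      have h1 : 1 ≤ 2 ^ l := Nat.one_le_two_pow
      have h2 : 2 ^ (l + 1) = 2 * 2 ^ l := by ring
      omega
    · push_neg at hfc
      obtain ⟨z₀, hz₀⟩ := hfc
      have hz₀ne : z₀ ≠ c2 := by
        intro hh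
        subst hh
        exact hz₀ (hceq ▸ hc)
      rcases lt_or_gt_of_ne hz₀ne with hzlt | hzgt
      · -- left side is finite: contradiction
        exfalso
        apply hLinf
        refine Set.Finite.subset ((Set.finite_Ioo z₀ c2).image (fun w => toLex (c1, w))) ?_
        rintro y ⟨hys, hyc⟩
        set j : Fin m := (ofLex y).1 with hj
        set w : ℤ := (ofLex y).2 with hw
        have hyeq : y = toLex (j, w) := rfl
        have hstep : j = c1 ∧ w < c2 := by
          rcases (Prod.Lex.toLex_lt_toLex (x := (j, w)) (y := (c1, c2))).1 hyc with h | h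
          · exfalso
            apply hz₀
            refine hconv.out hys hc ⟨?_, ?_⟩
            · rw [hyeq]; exact le_of_lt (copy_lt h)
            · rw [hceq]; exact le_of_lt (copy_lt2 hzlt)
          · exact h
        obtain ⟨hjc, hwc⟩ := hstep
        have hz₀w : z₀ < w := by
          rcases lt_trichotomy z₀ w with h | h | h
          · exact h
          · exfalso; apply hz₀; rw [← hjc, h, ← hyeq]; exact hys
          · exfalso
            apply hz₀
            refine hconv.out hys hc ⟨?_, ?_⟩
            · rw [hyeq, hjc]; exact le_of_lt (copy_lt2 h)
            · rw [hceq]; exact le_of_lt (copy_lt2 hzlt)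
        exact ⟨w, ⟨hz₀w, hwc⟩, by rw [hyeq, hjc]⟩
      · -- right side is finite: contradiction
        exfalso
        apply hRinf
        refine Set.Finite.subset ((Set.finite_Ioo c2 z₀).image (fun w => toLex (c1, w))) ?_
        rintro y ⟨hys, hyc⟩
        set j : Fin m := (ofLex y).1 with hj
        set w : ℤ := (ofLex y).2 with hw
        have hyeq : y = toLex (j, w) := rfl
        have hstep : j = c1 ∧ c2 < w := by
          rcases (Prod.Lex.toLex_lt_toLex (x := (c1, c2)) (y := (j, w))).1 hyc with h | h
          · exfalso
            apply hz₀
            refine hconv.out hc hys ⟨?_, ?_⟩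
            · rw [hceq]; exact le_of_lt (copy_lt2 hzgt)
            · rw [hyeq]; exact le_of_lt (copy_lt h)
          · exact ⟨h.1.symm, h.2⟩
        obtain ⟨hjc, hwc⟩ := hstep
        have hz₀w : w < z₀ := by
          rcases lt_trichotomy w z₀ with h | h | h
          · exact h
          · exfalso; apply hz₀; rw [← hjc, ← h, ← hyeq]; exact hys
          · exfalso
            apply hz₀
            refine hconv.out hc hys ⟨?_, ?_⟩
            · rw [hceq]; exact le_of_lt (copy_lt2 hzgt)
            · rw [hyeq, hjc]; exact le_of_lt (copy_lt2 h)
        exact ⟨w, ⟨hwc, hz₀w⟩, by rw [hyeq, hjc]⟩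
end Spec

/-- **Lemma 5.20**: for every finite `m ≥ 1`, `rk(ℤ · m) = ω + ⌊log₂(m + 1)⌋`, where
`ℤ · m` is the lexicographic order on `Fin m × ℤ` (`m` consecutive copies of `ℤ`). -/
theorem rank_int_mul_nat {m : ℕ} (hm : 1 ≤ m) :
    RkGE (ω + Nat.log 2 (m + 1)) (Set.univ : Set (Lex (Fin m × ℤ))) ∧
    ¬ RkGE (ω + Nat.log 2 (m + 1) + 1) (Set.univ : Set (Lex (Fin m × ℤ))) := by
  set k := Nat.log 2 (m + 1) with hk
  have hpow : 2 ^ k ≤ m + 1 := Nat.pow_log_le_self 2 (by omega)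
  have hpow2 : m + 1 < 2 ^ (k + 1) := Nat.lt_pow_succ_log_self (by norm_num) (m + 1)
  haveI : Nonempty (Fin m) := ⟨⟨0, hm⟩⟩
  haveI : Infinite (Lex (Fin m × ℤ)) := Infinite.of_injective toLex toLex.injective
  constructor
  · refine main_lb k Set.univ Set.infinite_univ Finset.univ ?_ (fun _ _ _ => Set.mem_univ _)
    rw [Finset.card_univ, Fintype.card_fin]; omega
  · intro h
    have h' : RkGE (ω + (↑(k + 1) : Ordinal)) (Set.univ : Set (Lex (Fin m × ℤ))) := by
      rw [Nat.cast_succ, ← add_assoc]; exact h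
    obtain ⟨-, hcard⟩ := full_count_of_rkGE (k + 1) Set.univ Set.ordConnected_univ h'
    have hle : Set.ncard {i : Fin m | ∀ z : ℤ, toLex (i, z) ∈ (Set.univ : Set (Lex (Fin m × ℤ)))} ≤ m := by
      refine le_trans (Set.ncard_le_ncard (Set.subset_univ _) Set.finite_univ) ?_
      rw [Set.ncard_univ]; simp
    have h1 : 1 ≤ 2 ^ k := Nat.one_le_two_pow
    have h2 : 2 ^ (k + 1) = 2 * 2 ^ k := by ring
    omega
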